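/- For every η ∈ (0, 2] there exist constants C₅, C₆ > 0 with the following property: for every sequence (a_j)_{j≥0} of nonnegative real numbers such that A := (Σ_{j≥0} 2^{2j} a_j²)^{1/2} and B := (Σ_{j≥0} 2^{2(1+η)j} a_j²)^{1/2} are finite, A > 0, and B ≥ e^e · A, one has Σ_{j≥0} (log(j+2))^{1/2} 2^j a_j ≤ A ( C₅ + C₆ ( log(B/A) · log log(B/A) )^{1/2} ). -/
import Mathlib

set_option maxHeartbeats 1000000

/-- `x^2/4 ≤ e^x` for `x ≥ 0`. -/
lemma aux_sq_le_exp (x : ℝ) (hx : 0 ≤ x) : x ^ 2 / 4 ≤ Real.exp x := by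
  have h1 : x / 2 + 1 ≤ Real.exp (x / 2) := Real.add_one_le_exp _
  have h2 : Real.exp x = Real.exp (x / 2) ^ 2 := by
    rw [sq, ← Real.exp_add]; ring_nf
  nlinarith [Real.exp_pos (x / 2)]

/-- Sequence-space form of the logarithmic Sobolev inequality:
`Σ (log(j+2))^{1/2} 2^j a_j ≤ A (C₅ + C₆ (log(B/A) log log(B/A))^{1/2})`. -/
theorem log_sobolev_sequence :
    ∀ η : ℝ, 0 < η → η ≤ 2 →
      ∃ C₅ : ℝ, 0 < C₅ ∧ ∃ C₆ : ℝ, 0 < C₆ ∧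
        ∀ a : ℕ → ℝ, (∀ j, 0 ≤ a j) →
          Summable (fun j : ℕ => (2 : ℝ) ^ (2 * j) * a j ^ 2) →
          Summable (fun j : ℕ => (2 : ℝ) ^ (2 * (1 + η) * (j : ℝ)) * a j ^ 2) →
          ∀ A B : ℝ,
            A = Real.sqrt (∑' j : ℕ, (2 : ℝ) ^ (2 * j) * a j ^ 2) →
            B = Real.sqrt (∑' j : ℕ, (2 : ℝ) ^ (2 * (1 + η) * (j : ℝ)) * a j ^ 2) →
            0 < A → Real.exp (Real.exp 1) * A ≤ B →
            ∑' j : ℕ, Real.sqrt (Real.log ((j : ℝ) + 2)) * 2 ^ j * a j ≤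
              A * (C₅ + C₆ * Real.sqrt (Real.log (B / A) *
                Real.log (Real.log (B / A)))) := by
  intro η hη hη2
  have hl2 : (0:ℝ) < Real.log 2 := Real.log_pos one_lt_two
  have hl2' : Real.log 2 < 0.6931471808 := Real.log_two_lt_d9
  set Cη : ℝ := 48 / (η * Real.log 2) ^ 2 with hCη
  have hCηpos : 0 < Cη := by positivity
  set r : ℝ := (2:ℝ) ^ (-(η/2)) with hr
  have hr0 : 0 ≤ r := Real.rpow_nonneg (by norm_num) _
  have hr1 : r < 1 := Real.rpow_lt_one_of_one_lt_of_neg one_lt_two (by linarith)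
  set K : ℝ := 2 / (η * Real.log 2) with hK
  have hKpos : 0 < K := by positivity
  have hlogK3 : 0 < Real.log (K + 3) := Real.log_pos (by linarith)
  refine ⟨Cη / (1 - r), div_pos hCηpos (by linarith),
    Real.sqrt ((K + 1) * (Real.log (K + 3) + 1)),
    Real.sqrt_pos.2 (mul_pos (by linarith) (by linarith)), ?_⟩
  intro a ha hs1 hs2 A B hA hB hApos hAB
  -- key pointwise bound `(j+2) ≤ Cη 2^{ηj/2}`
  have hjC : ∀ j : ℕ, ((j:ℝ) + 2) ≤ Cη * (2:ℝ) ^ ((η/2) * (j:ℝ)) := by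
    intro j
    have h2j : (2:ℝ) ^ ((η/2) * (j:ℝ)) = Real.exp ((η/2) * (j:ℝ) * Real.log 2) := by
      rw [Real.rpow_def_of_pos two_pos]; ring_nf
    rw [h2j]
    have hx : 0 ≤ (η/2) * (j:ℝ) * Real.log 2 := by positivity
    have h := aux_sq_le_exp _ hx
    rcases Nat.eq_zero_or_pos j with hj | hj
    · subst hj
      simp only [Nat.cast_zero, mul_zero, zero_mul, Real.exp_zero, mul_one]
      rw [hCη, le_div_iff₀ (by positivity)]
      have h14 : η * Real.log 2 ≤ 1.4 := by nlinarith
      nlinarith [mul_pos hη hl2, h14]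
    · have hj1 : (1:ℝ) ≤ (j:ℝ) := by exact_mod_cast hj
      have hkey : Cη * (((η/2) * (j:ℝ) * Real.log 2) ^ 2 / 4) = 3 * (j:ℝ) ^ 2 := by
        rw [hCη]; field_simp; ring
      nlinarith [mul_le_mul_of_nonneg_left h (le_of_lt hCηpos)]
  -- basic positivity facts
  have htsum2nonneg : (0:ℝ) ≤ ∑' j : ℕ, (2 : ℝ) ^ (2 * (1 + η) * (j : ℝ)) * a j ^ 2 :=
    tsum_nonneg fun j => by positivity
  have hBnonneg : 0 ≤ B := hB ▸ Real.sqrt_nonneg _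
  have hB2 : B ^ 2 = ∑' j : ℕ, (2 : ℝ) ^ (2 * (1 + η) * (j : ℝ)) * a j ^ 2 := by
    rw [hB, Real.sq_sqrt htsum2nonneg]
  have hA2 : A ^ 2 = ∑' j : ℕ, (2 : ℝ) ^ (2 * j) * a j ^ 2 := by
    rw [hA, Real.sq_sqrt (tsum_nonneg fun j => by positivity)]
  -- termwise bound from B
  have haB : ∀ j : ℕ, (2:ℝ) ^ ((1 + η) * (j:ℝ)) * a j ≤ B := by
    intro j
    have h1 : ((2:ℝ) ^ ((1 + η) * (j:ℝ)) * a j) ^ 2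
        = (2 : ℝ) ^ (2 * (1 + η) * (j : ℝ)) * a j ^ 2 := by
      rw [mul_pow, sq ((2:ℝ) ^ ((1 + η) * (j:ℝ))), ← Real.rpow_add two_pos,
        show (1 + η) * (j:ℝ) + (1 + η) * (j:ℝ) = 2 * (1 + η) * (j:ℝ) by ring]
    have h2 : ((2:ℝ) ^ ((1 + η) * (j:ℝ)) * a j) ^ 2 ≤ B ^ 2 := by
      rw [h1, hB2]
      exact Summable.le_tsum hs2 j fun i _ => by positivity
    have hx : 0 ≤ (2:ℝ) ^ ((1 + η) * (j:ℝ)) * a j := by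
      have := ha j; positivity
    calc (2:ℝ) ^ ((1 + η) * (j:ℝ)) * a j
        = Real.sqrt (((2:ℝ) ^ ((1 + η) * (j:ℝ)) * a j) ^ 2) := (Real.sqrt_sq hx).symm
      _ ≤ Real.sqrt (B ^ 2) := Real.sqrt_le_sqrt h2
      _ = B := Real.sqrt_sq hBnonneg
  -- termwise bound `2^j a_j ≤ B 2^{-ηj}`
  have h2ja : ∀ j : ℕ, (2:ℝ) ^ j * a j ≤ B * (2:ℝ) ^ (-η * (j:ℝ)) := by
    intro j
    have hc : (0:ℝ) < (2:ℝ) ^ (-η * (j:ℝ)) := Real.rpow_pos_of_pos two_pos _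
    have := mul_le_mul_of_nonneg_left (haB j) (le_of_lt hc)
    calc (2:ℝ) ^ j * a j
        = (2:ℝ) ^ (-η * (j:ℝ)) * ((2:ℝ) ^ ((1 + η) * (j:ℝ)) * a j) := by
          rw [← mul_assoc, ← Real.rpow_add two_pos,
            show -η * (j:ℝ) + (1 + η) * (j:ℝ) = ((j:ℕ):ℝ) by push_cast; ring,
            Real.rpow_natCast]
      _ ≤ (2:ℝ) ^ (-η * (j:ℝ)) * B := this
      _ = B * (2:ℝ) ^ (-η * (j:ℝ)) := mul_comm _ _
  -- termwise geometric bound for the whole summand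
  have htermle : ∀ j : ℕ,
      Real.sqrt (Real.log ((j : ℝ) + 2)) * 2 ^ j * a j ≤ Cη * B * r ^ j := by
    intro j
    have hsq : Real.sqrt (Real.log ((j : ℝ) + 2)) ≤ (j:ℝ) + 2 := by
      have hlog : Real.log ((j:ℝ) + 2) ≤ ((j:ℝ) + 2) ^ 2 := by
        have h := Real.log_le_sub_one_of_pos (show (0:ℝ) < (j:ℝ) + 2 by positivity)
        nlinarith [Nat.cast_nonneg (α := ℝ) j]
      calc Real.sqrt (Real.log ((j:ℝ) + 2)) ≤ Real.sqrt (((j:ℝ) + 2) ^ 2) :=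
          Real.sqrt_le_sqrt hlog
        _ = (j:ℝ) + 2 := Real.sqrt_sq (by positivity)
    have hrj : r ^ j = (2:ℝ) ^ (-(η/2) * (j:ℝ)) := by
      rw [hr, ← Real.rpow_natCast ((2:ℝ) ^ (-(η/2))) j,
        ← Real.rpow_mul (by norm_num : (0:ℝ) ≤ 2)]
    have hstep : ((j:ℝ) + 2) * ((2:ℝ) ^ (-η * (j:ℝ))) ≤ Cη * (2:ℝ) ^ (-(η/2) * (j:ℝ)) := by
      have h1 := mul_le_mul_of_nonneg_right (hjC j)
        (le_of_lt (Real.rpow_pos_of_pos two_pos (-η * (j:ℝ))))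
      calc ((j:ℝ) + 2) * ((2:ℝ) ^ (-η * (j:ℝ)))
          ≤ Cη * (2:ℝ) ^ ((η/2) * (j:ℝ)) * (2:ℝ) ^ (-η * (j:ℝ)) := h1
        _ = Cη * (2:ℝ) ^ (-(η/2) * (j:ℝ)) := by
            rw [mul_assoc, ← Real.rpow_add two_pos,
              show η / 2 * (j:ℝ) + -η * (j:ℝ) = -(η/2) * (j:ℝ) by ring]
    calc Real.sqrt (Real.log ((j : ℝ) + 2)) * 2 ^ j * a j
        ≤ ((j:ℝ) + 2) * (2 ^ j * a j) := by
          rw [mul_assoc]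
          exact mul_le_mul_of_nonneg_right hsq (mul_nonneg (by positivity) (ha j))
      _ ≤ ((j:ℝ) + 2) * (B * (2:ℝ) ^ (-η * (j:ℝ))) :=
          mul_le_mul_of_nonneg_left (h2ja j) (by positivity)
      _ = B * (((j:ℝ) + 2) * ((2:ℝ) ^ (-η * (j:ℝ)))) := by ring
      _ ≤ B * (Cη * (2:ℝ) ^ (-(η/2) * (j:ℝ))) :=
          mul_le_mul_of_nonneg_left hstep hBnonneg
      _ = Cη * B * r ^ j := by rw [hrj]; ring
  have htermnonneg : ∀ j : ℕ, 0 ≤ Real.sqrt (Real.log ((j : ℝ) + 2)) * 2 ^ j * a j := by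
    intro j; have := ha j; positivity
  have hgsum : Summable (fun j : ℕ => Cη * B * r ^ j) :=
    (summable_geometric_of_lt_one hr0 hr1).mul_left _
  have hsum : Summable (fun j : ℕ => Real.sqrt (Real.log ((j : ℝ) + 2)) * 2 ^ j * a j) :=
    Summable.of_nonneg_of_le htermnonneg htermle hgsum
  -- the ratio and its logs
  have hBApos : 0 < B / A := by
    have : 0 < B := lt_of_lt_of_le (by positivity) hAB
    positivity
  have hBA1 : Real.exp (Real.exp 1) ≤ B / A := (le_div_iff₀ hApos).2 hAB
  set L := Real.log (B / A) with hL
  have hLe : Real.exp 1 ≤ L := by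
    rw [hL, ← Real.log_exp (Real.exp 1)]
    exact Real.log_le_log (Real.exp_pos _) hBA1
  have hexp1 : (2:ℝ) ≤ Real.exp 1 := by nlinarith [Real.add_one_le_exp (1:ℝ)]
  have hL2 : (2:ℝ) ≤ L := le_trans hexp1 hLe
  have hlogL : (1:ℝ) ≤ Real.log L := by
    rw [← Real.log_exp 1]
    exact Real.log_le_log (Real.exp_pos _) hLe
  -- the splitting index
  set J : ℕ := ⌈K * L⌉₊ with hJdef
  have hJge : K * L ≤ (J:ℝ) := Nat.le_ceil _
  have hJlt : (J:ℝ) < K * L + 1 := Nat.ceil_lt_add_one (by positivity)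
  -- B r^J ≤ A
  have hBrJ : B * r ^ J ≤ A := by
    have hrJ : r ^ J = Real.exp (-(η/2) * (J:ℝ) * Real.log 2) := by
      rw [hr, ← Real.rpow_natCast ((2:ℝ) ^ (-(η/2))) J,
        ← Real.rpow_mul (by norm_num : (0:ℝ) ≤ 2), Real.rpow_def_of_pos two_pos,
        show Real.log 2 * (-(η/2) * (J:ℝ)) = -(η/2) * (J:ℝ) * Real.log 2 by ring]
    have hBeq : B = A * Real.exp L := by
      rw [hL, Real.exp_log hBApos, mul_comm, div_mul_cancel₀ _ hApos.ne']
    have hexps : L + (-(η/2) * (J:ℝ) * Real.log 2) ≤ 0 := by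
      have h1 : K * L * (η * Real.log 2 / 2) ≤ (J:ℝ) * (η * Real.log 2 / 2) :=
        mul_le_mul_of_nonneg_right hJge (by positivity)
      have h2 : K * L * (η * Real.log 2 / 2) = L := by
        rw [hK]; field_simp
      nlinarith
    calc B * r ^ J = A * Real.exp (L + (-(η/2) * (J:ℝ) * Real.log 2)) := by
          rw [hBeq, hrJ, Real.exp_add]; ring
      _ ≤ A * 1 :=
          mul_le_mul_of_nonneg_left (Real.exp_le_one_iff.2 hexps) hApos.le
      _ = A := mul_one A
  -- split the sum
  have hsplit := (Summable.sum_add_tsum_nat_add (f := fun j : ℕ =>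
    Real.sqrt (Real.log ((j : ℝ) + 2)) * 2 ^ j * a j) (J + 1) hsum).symm
  -- high frequency part
  have hhigh : ∑' i : ℕ, Real.sqrt (Real.log (((i + (J + 1) : ℕ) : ℝ) + 2)) *
      2 ^ (i + (J + 1)) * a (i + (J + 1)) ≤ Cη / (1 - r) * A := by
    have hsum' : Summable (fun i : ℕ => Real.sqrt (Real.log (((i + (J + 1) : ℕ) : ℝ) + 2)) *
        2 ^ (i + (J + 1)) * a (i + (J + 1))) := (summable_nat_add_iff (J + 1)).2 hsum
    have hgsum' : Summable (fun i : ℕ => Cη * B * r ^ (J + 1) * r ^ i) :=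
      (summable_geometric_of_lt_one hr0 hr1).mul_left _
    have h1 : ∑' i : ℕ, Real.sqrt (Real.log (((i + (J + 1) : ℕ) : ℝ) + 2)) *
        2 ^ (i + (J + 1)) * a (i + (J + 1)) ≤ ∑' i : ℕ, Cη * B * r ^ (J + 1) * r ^ i := by
      refine Summable.tsum_le_tsum (fun i => ?_) hsum' hgsum'
      have := htermle (i + (J + 1))
      calc Real.sqrt (Real.log (((i + (J + 1) : ℕ) : ℝ) + 2)) *
          2 ^ (i + (J + 1)) * a (i + (J + 1)) ≤ Cη * B * r ^ (i + (J + 1)) := this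
        _ = Cη * B * r ^ (J + 1) * r ^ i := by rw [pow_add]; ring
    have h2 : ∑' i : ℕ, Cη * B * r ^ (J + 1) * r ^ i = Cη * B * r ^ (J + 1) * (1 - r)⁻¹ := by
      rw [tsum_mul_left, tsum_geometric_of_lt_one hr0 hr1]
    have h3 : Cη * B * r ^ (J + 1) * (1 - r)⁻¹ ≤ Cη / (1 - r) * A := by
      have hr1' : 0 < 1 - r := by linarith
      have hpow : B * r ^ (J + 1) ≤ A := by
        calc B * r ^ (J + 1) = B * r ^ J * r := by rw [pow_succ]; ring
          _ ≤ B * r ^ J * 1 := by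
              refine mul_le_mul_of_nonneg_left (le_of_lt hr1) ?_
              positivity
          _ = B * r ^ J := mul_one _
          _ ≤ A := hBrJ
      calc Cη * B * r ^ (J + 1) * (1 - r)⁻¹ = Cη / (1 - r) * (B * r ^ (J + 1)) := by
            rw [div_eq_mul_inv]; ring
        _ ≤ Cη / (1 - r) * A := by
            refine mul_le_mul_of_nonneg_left hpow ?_
            positivity
    calc _ ≤ _ := h1
      _ = _ := h2
      _ ≤ _ := h3
  -- low frequency part via Cauchy–Schwarz
  have hlow : ∑ j ∈ Finset.range (J + 1), Real.sqrt (Real.log ((j : ℝ) + 2)) * 2 ^ j * a j ≤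
      Real.sqrt ((K + 1) * (Real.log (K + 3) + 1)) * Real.sqrt (L * Real.log L) * A := by
    have hCS := Real.sum_mul_le_sqrt_mul_sqrt (Finset.range (J + 1))
      (fun j => Real.sqrt (Real.log ((j : ℝ) + 2))) (fun j => 2 ^ j * a j)
    have heq : ∑ j ∈ Finset.range (J + 1), Real.sqrt (Real.log ((j : ℝ) + 2)) * 2 ^ j * a j
        = ∑ j ∈ Finset.range (J + 1),
            Real.sqrt (Real.log ((j : ℝ) + 2)) * (2 ^ j * a j) := by
      exact Finset.sum_congr rfl fun j _ => by ring
    have hsum1 : ∑ j ∈ Finset.range (J + 1), Real.sqrt (Real.log ((j : ℝ) + 2)) ^ 2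
        ≤ ((J:ℝ) + 1) * Real.log ((J:ℝ) + 2) := by
      have h1 : ∀ j ∈ Finset.range (J + 1),
          Real.sqrt (Real.log ((j : ℝ) + 2)) ^ 2 ≤ Real.log ((J:ℝ) + 2) := by
        intro j hj
        have hj' : (j:ℝ) ≤ (J:ℝ) := by
          exact_mod_cast Nat.lt_succ_iff.1 (Finset.mem_range.1 hj)
        rw [Real.sq_sqrt (Real.log_nonneg (by linarith [Nat.cast_nonneg (α := ℝ) j]))]
        exact Real.log_le_log (by positivity) (by linarith)
      calc ∑ j ∈ Finset.range (J + 1), Real.sqrt (Real.log ((j : ℝ) + 2)) ^ 2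
          ≤ ∑ _j ∈ Finset.range (J + 1), Real.log ((J:ℝ) + 2) := Finset.sum_le_sum h1
        _ = ((J:ℝ) + 1) * Real.log ((J:ℝ) + 2) := by
            rw [Finset.sum_const, Finset.card_range]; push_cast; ring
    have hsum2 : ∑ j ∈ Finset.range (J + 1), ((2:ℝ) ^ j * a j) ^ 2 ≤ A ^ 2 := by
      rw [hA2]
      have heq2 : ∀ j : ℕ, ((2:ℝ) ^ j * a j) ^ 2 = (2 : ℝ) ^ (2 * j) * a j ^ 2 := by
        intro j; rw [mul_pow, ← pow_mul]; ring_nf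
      calc ∑ j ∈ Finset.range (J + 1), ((2:ℝ) ^ j * a j) ^ 2
          = ∑ j ∈ Finset.range (J + 1), (2 : ℝ) ^ (2 * j) * a j ^ 2 :=
            Finset.sum_congr rfl fun j _ => heq2 j
        _ ≤ _ := Summable.sum_le_tsum _ (fun i _ => by positivity) hs1
    have hJbound : ((J:ℝ) + 1) * Real.log ((J:ℝ) + 2)
        ≤ ((K + 1) * (Real.log (K + 3) + 1)) * (L * Real.log L) := by
      have hJ1 : (J:ℝ) + 1 ≤ (K + 1) * L := by nlinarith
      have hJ2 : Real.log ((J:ℝ) + 2) ≤ (Real.log (K + 3) + 1) * Real.log L := by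
        have harg : (J:ℝ) + 2 ≤ (K + 3) * L := by nlinarith
        have h1 : Real.log ((J:ℝ) + 2) ≤ Real.log ((K + 3) * L) :=
          Real.log_le_log (by positivity) harg
        have h2 : Real.log ((K + 3) * L) = Real.log (K + 3) + Real.log L :=
          Real.log_mul (by positivity) (by positivity)
        nlinarith [hlogK3.le]
      have hlogJ : 0 ≤ Real.log ((J:ℝ) + 2) :=
        Real.log_nonneg (by linarith [Nat.cast_nonneg (α := ℝ) J])
      have hJ1' : 0 ≤ (J:ℝ) + 1 := by positivity
      calc ((J:ℝ) + 1) * Real.log ((J:ℝ) + 2) ≤ ((K + 1) * L) * Real.log ((J:ℝ) + 2) :=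
            mul_le_mul_of_nonneg_right hJ1 hlogJ
        _ ≤ ((K + 1) * L) * ((Real.log (K + 3) + 1) * Real.log L) :=
            mul_le_mul_of_nonneg_left hJ2 (by positivity)
        _ = ((K + 1) * (Real.log (K + 3) + 1)) * (L * Real.log L) := by ring
    have hs1' : Real.sqrt (∑ j ∈ Finset.range (J + 1), Real.sqrt (Real.log ((j : ℝ) + 2)) ^ 2)
        ≤ Real.sqrt ((K + 1) * (Real.log (K + 3) + 1)) * Real.sqrt (L * Real.log L) := by
      rw [← Real.sqrt_mul (by positivity)]
      exact Real.sqrt_le_sqrt (le_trans hsum1 hJbound)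
    have hs2' : Real.sqrt (∑ j ∈ Finset.range (J + 1), ((2:ℝ) ^ j * a j) ^ 2) ≤ A := by
      calc Real.sqrt (∑ j ∈ Finset.range (J + 1), ((2:ℝ) ^ j * a j) ^ 2)
          ≤ Real.sqrt (A ^ 2) := Real.sqrt_le_sqrt hsum2
        _ = A := Real.sqrt_sq (le_of_lt hApos)
    calc ∑ j ∈ Finset.range (J + 1), Real.sqrt (Real.log ((j : ℝ) + 2)) * 2 ^ j * a j
        = ∑ j ∈ Finset.range (J + 1), Real.sqrt (Real.log ((j : ℝ) + 2)) * (2 ^ j * a j) := heq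
      _ ≤ Real.sqrt (∑ j ∈ Finset.range (J + 1), Real.sqrt (Real.log ((j : ℝ) + 2)) ^ 2) *
          Real.sqrt (∑ j ∈ Finset.range (J + 1), ((2:ℝ) ^ j * a j) ^ 2) := hCS
      _ ≤ (Real.sqrt ((K + 1) * (Real.log (K + 3) + 1)) * Real.sqrt (L * Real.log L)) * A := by
          refine mul_le_mul hs1' hs2' (Real.sqrt_nonneg _) ?_
          positivity
  -- combine
  rw [hsplit]
  have : Real.sqrt ((K + 1) * (Real.log (K + 3) + 1)) * Real.sqrt (L * Real.log L) * A +
      Cη / (1 - r) * A = A * (Cη / (1 - r) +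
      Real.sqrt ((K + 1) * (Real.log (K + 3) + 1)) * Real.sqrt (L * Real.log L)) := by ring
  linarith [hlow, hhigh]
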